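/- With M : 𝔽₂^6 → 𝔽₂^3 the linear map with rows (0,0,1,1,1,1), (1,1,0,0,1,1), (1,1,1,1,0,0), and Q ⊆ 𝔽₂^6 the subspace spanned by (1,1,0,0,0,0), (0,0,1,1,0,0), (0,0,0,0,1,1), the quotient ker(M)/Q is one-dimensional over 𝔽₂, generated by the class of (1,0,1,0,1,0). -/

import Mathlib

/-!
`Q` is the space of vectors whose three pair sums `v₀ + v₁`, `v₂ + v₃`, `v₄ + v₅` vanish, and `M`
only sees these pair sums: its rows say that any two of them add up to `0`, i.e. in
characteristic `2` that the three pair sums are equal. So modulo `Q` a vector of `ker M` is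
determined by the common value of its pair sums, which is `0` or `1`, and `(1,0,1,0,1,0)`
realises the value `1`.
-/

/-- The matrix of the map `𝒫 → 𝓡` in the Brauer group computation for the
Hassett–Pirutka–Tschinkel example. -/
def HPTmatrix : Matrix (Fin 3) (Fin 6) (ZMod 2) :=
  !![0,0,1,1,1,1; 1,1,0,0,1,1; 1,1,1,1,0,0]

/-- The subspace `𝒬 ⊆ 𝔽₂⁶` spanned by `(1,1,0,0,0,0)`, `(0,0,1,1,0,0)`, `(0,0,0,0,1,1)`. -/
def HPTQ : Submodule (ZMod 2) (Fin 6 → ZMod 2) :=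
  Submodule.span (ZMod 2) {![1,1,0,0,0,0], ![0,0,1,1,0,0], ![0,0,0,0,1,1]}

theorem CharTwo.add_eq_zero_pairwise_iff {R : Type*} [Ring R] [CharP R 2] (a b c : R) :
    (b + c = 0 ∧ a + c = 0 ∧ a + b = 0) ↔ (a = b ∧ b = c) := by
  simp only [CharTwo.add_eq_zero]
  constructor
  · rintro ⟨hbc, -, hab⟩
    exact ⟨hab, hbc⟩
  · rintro ⟨rfl, rfl⟩
    exact ⟨rfl, rfl, rfl⟩

theorem mem_HPTQ_iff (v : Fin 6 → ZMod 2) :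
    v ∈ HPTQ ↔ v 0 + v 1 = 0 ∧ v 2 + v 3 = 0 ∧ v 4 + v 5 = 0 := by
  constructor
  · intro hv
    induction hv using Submodule.span_induction with
    | mem x hx => rcases hx with rfl | rfl | rfl <;> decide
    | zero => simp
    | add x y _ _ hx hy =>
      simp only [Pi.add_apply]
      exact ⟨by linear_combination hx.1 + hy.1, by linear_combination hx.2.1 + hy.2.1,
        by linear_combination hx.2.2 + hy.2.2⟩
    | smul a x _ hx =>
      simp only [Pi.smul_apply, smul_eq_mul]
      exact ⟨by linear_combination a * hx.1, by linear_combination a * hx.2.1,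
        by linear_combination a * hx.2.2⟩
  · rintro ⟨h01, h23, h45⟩
    rw [CharTwo.add_eq_zero] at h01 h23 h45
    have hv : v = v 0 • ![1,1,0,0,0,0] + v 2 • ![0,0,1,1,0,0] + v 4 • ![0,0,0,0,1,1] := by
      funext i
      fin_cases i <;> simp [h01, h23, h45]
    rw [hv]
    refine add_mem (add_mem ?_ ?_) ?_ <;>
      exact Submodule.smul_mem _ _ (Submodule.subset_span (by simp))

theorem mem_ker_HPTmatrix_iff (v : Fin 6 → ZMod 2) :
    v ∈ LinearMap.ker HPTmatrix.mulVecLin ↔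
      v 0 + v 1 = v 2 + v 3 ∧ v 2 + v 3 = v 4 + v 5 := by
  rw [← CharTwo.add_eq_zero_pairwise_iff, LinearMap.mem_ker, Matrix.mulVecLin_apply, funext_iff,
    Fin.forall_fin_succ, Fin.forall_fin_succ, Fin.forall_fin_succ]
  simp [HPTmatrix, Matrix.mulVec, dotProduct, Fin.sum_univ_six, add_assoc]

/-- `ker(M)/Q` is one-dimensional over `𝔽₂`, generated by the class of `(1,0,1,0,1,0)`:
`Q ⊆ ker M`, the vector `(1,0,1,0,1,0)` lies in `ker M` but not in `Q`, and every element
of `ker M` is congruent mod `Q` either to `0` or to `(1,0,1,0,1,0)`. -/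
theorem HPT_kernel_mod_Q_one_dimensional :
    HPTQ ≤ LinearMap.ker HPTmatrix.mulVecLin ∧
    ![1,0,1,0,1,0] ∈ LinearMap.ker HPTmatrix.mulVecLin ∧
    ![1,0,1,0,1,0] ∉ HPTQ ∧
    ∀ w ∈ LinearMap.ker HPTmatrix.mulVecLin, w ∈ HPTQ ∨ w - ![1,0,1,0,1,0] ∈ HPTQ := by
  simp only [SetLike.le_def, mem_HPTQ_iff, mem_ker_HPTmatrix_iff]
  refine ⟨fun v ⟨h01, h23, h45⟩ => ⟨h01.trans h23.symm, h23.trans h45.symm⟩,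
    by decide, by decide, ?_⟩
  rintro w ⟨h0123, h2345⟩
  obtain h01 | h01 : w 0 + w 1 = 0 ∨ w 0 + w 1 = 1 :=
    (by decide : ∀ x : ZMod 2, x = 0 ∨ x = 1) _
  · exact Or.inl ⟨h01, h0123 ▸ h01, h2345 ▸ h0123 ▸ h01⟩
  · right
    simp only [Pi.sub_apply, Matrix.cons_val, sub_zero]
    exact ⟨by linear_combination h01, by linear_combination h01 - h0123,
      by linear_combination h01 - h0123 - h2345⟩
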